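/- For every matrix M ∈ Γ⊥ (i.e., every n×n matrix supported on the set of node pairs that are unobserved or are observed disagreements of the clustering K*), the spectral norm satisfies ‖M‖ ≤ n·D_max·‖M‖_∞. -/

import Mathlib

open Matrix MeasureTheory

open scoped Classical

/-- Keep the entries of `M` indexed by `S` and zero out the rest. -/
noncomputable def projS {n : ℕ} (S : Set (Fin n × Fin n)) (M : Matrix (Fin n) (Fin n) ℝ) :
    Matrix (Fin n) (Fin n) ℝ :=
  Matrix.of fun i j => if (i, j) ∈ S then M i j else 0

/-- Zero out the entries of `M` indexed by `S` (projection onto the complement). -/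
noncomputable def zeroOn {n : ℕ} (S : Set (Fin n × Fin n)) (M : Matrix (Fin n) (Fin n) ℝ) :
    Matrix (Fin n) (Fin n) ℝ :=
  Matrix.of fun i j => if (i, j) ∈ S then 0 else M i j

/-- Entrywise ℓ₁ norm. -/
noncomputable def l1Norm {n : ℕ} (M : Matrix (Fin n) (Fin n) ℝ) : ℝ := ∑ i, ∑ j, |M i j|

/-- Entrywise ℓ∞ norm (max of absolute values of the entries). -/
noncomputable def linfNorm {n : ℕ} (M : Matrix (Fin n) (Fin n) ℝ) : ℝ :=
  sSup (Set.range fun q : Fin n × Fin n => |M q.1 q.2|)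

/-- Frobenius norm. -/
noncomputable def frobNorm {n : ℕ} (M : Matrix (Fin n) (Fin n) ℝ) : ℝ :=
  Real.sqrt (∑ i, ∑ j, (M i j) ^ 2)

/-- Nuclear norm: the sum of the singular values, i.e. the trace of `√(MᴴM)`. -/
noncomputable def nuclearNorm {n : ℕ} (M : Matrix (Fin n) (Fin n) ℝ) : ℝ :=
  ((Matrix.posSemidef_conjTranspose_mul_self M).1.eigenvectorUnitary.1 *
    Matrix.diagonal (Real.sqrt ∘ (Matrix.posSemidef_conjTranspose_mul_self M).1.eigenvalues) *
    (star (Matrix.posSemidef_conjTranspose_mul_self M).1.eigenvectorUnitary :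
      Matrix (Fin n) (Fin n) ℝ)).trace

/-- Spectral norm: the operator norm as a map between Euclidean spaces. -/
noncomputable def specNorm {m l : Type*} [Fintype m] [Fintype l] [DecidableEq l]
    (M : Matrix m l ℝ) : ℝ :=
  ‖LinearMap.toContinuousLinearMap (Matrix.toEuclideanLin M)‖

/-- Entrywise sign matrix. -/
noncomputable def sgnMat {n : ℕ} (M : Matrix (Fin n) (Fin n) ℝ) : Matrix (Fin n) (Fin n) ℝ :=
  Matrix.of fun i j => Real.sign (M i j)

/-- The support of a matrix, as a set of index pairs. -/
def suppSet {n : ℕ} (M : Matrix (Fin n) (Fin n) ℝ) : Set (Fin n × Fin n) :=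
  {q | M q.1 q.2 ≠ 0}

/-- A matrix is a valid clustering matrix iff for some assignment of nodes to clusters,
`K i j = 1` when `i, j` are in the same cluster and `K i j = 0` otherwise. -/
def IsValidClustering {n : ℕ} (K : Matrix (Fin n) (Fin n) ℝ) : Prop :=
  ∃ f : Fin n → Fin n, ∀ i j, K i j = if f i = f j then 1 else 0

/-- Objective of the convex program CP_η. -/
noncomputable def cpObj {n : ℕ} (η : ℝ) (B K : Matrix (Fin n) (Fin n) ℝ) : ℝ :=
  η * l1Norm B + (1 - η) * nuclearNorm K

/-- Feasibility for the convex program: `P_Ωobs (B + K) = P_Ωobs (I + A)`. -/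
def cpFeasible {n : ℕ} (Obs : Set (Fin n × Fin n)) (A B K : Matrix (Fin n) (Fin n) ℝ) : Prop :=
  projS Obs (B + K) = projS Obs (1 + A)

/-- Number of observed disagreements of the clustering matrix `K` with the observed graph. -/
noncomputable def disagreements {n : ℕ} (Obs : Set (Fin n × Fin n))
    (A K : Matrix (Fin n) (Fin n) ℝ) : ℕ :=
  {q : Fin n × Fin n | q.1 ≠ q.2 ∧ q ∈ Obs ∧ A q.1 q.2 ≠ K q.1 q.2}.ncard

/-- Size of cluster `j` under the assignment `c`. -/
noncomputable def clusterSize {n p : ℕ} (c : Fin n → Fin p) (j : Fin p) : ℕ :=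
  {i : Fin n | c i = j}.ncard

/-- Minimum cluster size. -/
noncomputable def KminVal {n p : ℕ} (c : Fin n → Fin p) : ℕ :=
  sInf (Set.range fun j => clusterSize c j)

/-- The valid clustering matrix associated to the assignment `c`. -/
noncomputable def Kmat {n p : ℕ} (c : Fin n → Fin p) : Matrix (Fin n) (Fin n) ℝ :=
  Matrix.of fun i j => if c i = c j then 1 else 0

/-- The matrix of observed disagreements of the clustering `c`. -/
noncomputable def Bstar {n p : ℕ} (Obs : Set (Fin n × Fin n)) (A : Matrix (Fin n) (Fin n) ℝ)
    (c : Fin n → Fin p) : Matrix (Fin n) (Fin n) ℝ :=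
  projS Obs (A + 1 - Kmat c)

/-- Index set of Γ: observed non-disagreement entries (includes the diagonal). -/
def GammaSet {n p : ℕ} (Obs : Set (Fin n × Fin n)) (A : Matrix (Fin n) (Fin n) ℝ)
    (c : Fin n → Fin p) : Set (Fin n × Fin n) :=
  {q | q ∈ Obs ∧ Bstar Obs A c q.1 q.2 = 0}

/-- The matrix `U` whose `j`-th column is `K_j^{-1/2}` on the indices of cluster `j`. -/
noncomputable def Umat {n p : ℕ} (c : Fin n → Fin p) : Matrix (Fin n) (Fin p) ℝ :=
  Matrix.of fun i j => if c i = j then (Real.sqrt (clusterSize c j))⁻¹ else 0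

/-- The subspace `T = {U Xᵀ + Y Uᵀ}` as a set of matrices. -/
def Tspace {n p : ℕ} (U : Matrix (Fin n) (Fin p) ℝ) : Set (Matrix (Fin n) (Fin n) ℝ) :=
  {M | ∃ X Y : Matrix (Fin n) (Fin p) ℝ, M = U * Xᵀ + Y * Uᵀ}

/-- Orthogonal projection onto `T`. -/
noncomputable def PT {n p : ℕ} (U : Matrix (Fin n) (Fin p) ℝ) (M : Matrix (Fin n) (Fin n) ℝ) :
    Matrix (Fin n) (Fin n) ℝ :=
  U * Uᵀ * M + M * (U * Uᵀ) - U * Uᵀ * M * (U * Uᵀ)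

/-- `d_{i,k}`: number of "bad" (unobserved or disagreeing) entries between node `i`
and cluster `k`. -/
noncomputable def dval {n p : ℕ} (Obs : Set (Fin n × Fin n)) (A : Matrix (Fin n) (Fin n) ℝ)
    (c : Fin n → Fin p) (i : Fin n) (k : Fin p) : ℕ :=
  if k = c i then {j : Fin n | c j = k ∧ ((i, j) ∉ Obs ∨ A i j = 0)}.ncard
  else {j : Fin n | c j = k ∧ ((i, j) ∉ Obs ∨ A i j = 1)}.ncard

/-- `D_max`: the largest fraction of bad entries between a node and a cluster. -/
noncomputable def Dmax {n p : ℕ} (Obs : Set (Fin n × Fin n)) (A : Matrix (Fin n) (Fin n) ℝ)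
    (c : Fin n → Fin p) : ℝ :=
  sSup (Set.range fun q : Fin n × Fin p =>
    (dval Obs A c q.1 q.2 : ℝ) / min (clusterSize c q.2 : ℝ) (clusterSize c (c q.1) : ℝ))


section AuxSpectral

variable {n p : ℕ}

lemma aux_abs_le_linf (M : Matrix (Fin n) (Fin n) ℝ) (i j : Fin n) :
    |M i j| ≤ linfNorm M :=
  le_csSup (Set.Finite.bddAbove (Set.finite_range _)) ⟨(i, j), rfl⟩

lemma aux_linf_nonneg (hn : 1 ≤ n) (M : Matrix (Fin n) (Fin n) ℝ) : 0 ≤ linfNorm M :=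
  (abs_nonneg _).trans (aux_abs_le_linf M ⟨0, hn⟩ ⟨0, hn⟩)

lemma aux_linf_transpose (M : Matrix (Fin n) (Fin n) ℝ) : linfNorm Mᵀ = linfNorm M := by
  unfold linfNorm
  congr 1
  ext x
  constructor
  · rintro ⟨q, rfl⟩; exact ⟨(q.2, q.1), rfl⟩
  · rintro ⟨q, rfl⟩; exact ⟨(q.2, q.1), rfl⟩

lemma aux_csize_pos (c : Fin n → Fin p) (hc : Function.Surjective c) (k : Fin p) :
    0 < clusterSize c k := by
  obtain ⟨i, hi⟩ := hc k
  exact (Set.ncard_pos (Set.toFinite _)).mpr ⟨i, hi⟩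

lemma aux_Dmax_nonneg (hn : 1 ≤ n) (hp : 0 < p) (Obs : Set (Fin n × Fin n))
    (A : Matrix (Fin n) (Fin n) ℝ) (c : Fin n → Fin p) : 0 ≤ Dmax Obs A c := by
  refine le_trans ?_ (le_csSup (Set.Finite.bddAbove (Set.finite_range _))
    ⟨((⟨0, hn⟩ : Fin n), (⟨0, hp⟩ : Fin p)), rfl⟩)
  positivity

lemma aux_dval_le (Obs : Set (Fin n × Fin n)) (A : Matrix (Fin n) (Fin n) ℝ)
    (c : Fin n → Fin p) (hc : Function.Surjective c) (i : Fin n) (k : Fin p) :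
    (dval Obs A c i k : ℝ)
      ≤ Dmax Obs A c * min (clusterSize c k : ℝ) (clusterSize c (c i) : ℝ) := by
  have h1 : (0 : ℝ) < (clusterSize c k : ℝ) := by exact_mod_cast aux_csize_pos c hc k
  have h2 : (0 : ℝ) < (clusterSize c (c i) : ℝ) := by exact_mod_cast aux_csize_pos c hc (c i)
  have hmin : (0 : ℝ) < min (clusterSize c k : ℝ) (clusterSize c (c i) : ℝ) := lt_min h1 h2
  have hle : (dval Obs A c i k : ℝ) / min (clusterSize c k : ℝ) (clusterSize c (c i) : ℝ)
      ≤ Dmax Obs A c :=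
    le_csSup (Set.Finite.bddAbove (Set.finite_range _)) ⟨(i, k), rfl⟩
  calc (dval Obs A c i k : ℝ)
      = (dval Obs A c i k : ℝ) / min (clusterSize c k : ℝ) (clusterSize c (c i) : ℝ)
        * min (clusterSize c k : ℝ) (clusterSize c (c i) : ℝ) := by
        field_simp
    _ ≤ Dmax Obs A c * min (clusterSize c k : ℝ) (clusterSize c (c i) : ℝ) :=
        mul_le_mul_of_nonneg_right hle hmin.le

lemma aux_dval_card (Obs : Set (Fin n × Fin n)) (A : Matrix (Fin n) (Fin n) ℝ)
    (c : Fin n → Fin p) (i : Fin n) (k : Fin p) :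
    dval Obs A c i k =
      (Finset.univ.filter (fun j : Fin n =>
        c j = k ∧ ((i, j) ∉ Obs ∨ A i j = if k = c i then 0 else 1))).card := by
  unfold dval
  split_ifs with h
  · have hset : {j : Fin n | c j = k ∧ ((i, j) ∉ Obs ∨ A i j = 0)}
        = ↑(Finset.univ.filter (fun j : Fin n =>
            c j = k ∧ ((i, j) ∉ Obs ∨ A i j = if k = c i then 0 else 1))) := by
      ext j; simp [h]
    rw [hset, Set.ncard_coe_finset]
    congr 1
    ext j
    simp [h]
  · have hset : {j : Fin n | c j = k ∧ ((i, j) ∉ Obs ∨ A i j = 1)}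
        = ↑(Finset.univ.filter (fun j : Fin n =>
            c j = k ∧ ((i, j) ∉ Obs ∨ A i j = if k = c i then 0 else 1))) := by
      ext j; simp [h]
    rw [hset, Set.ncard_coe_finset]
    congr 1
    ext j
    simp [h]

lemma aux_bad (Obs : Set (Fin n × Fin n))
    (A : Matrix (Fin n) (Fin n) ℝ)
    (hA01 : ∀ i j : Fin n, (i, j) ∈ Obs → A i j = 0 ∨ A i j = 1)
    (hAdiag : ∀ i, A i i = 0) (c : Fin n → Fin p) {i j : Fin n}
    (hg : (i, j) ∉ GammaSet Obs A c) :
    (i, j) ∉ Obs ∨ A i j = if c j = c i then 0 else 1 := by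
  by_cases ho : (i, j) ∈ Obs
  · right
    have hB : Bstar Obs A c i j ≠ 0 := fun h => hg ⟨ho, h⟩
    unfold Bstar projS at hB
    simp only [Matrix.of_apply, if_pos ho, Matrix.sub_apply, Matrix.add_apply] at hB
    by_cases hij : i = j
    · exfalso
      subst hij
      simp [Matrix.one_apply, Kmat, hAdiag i] at hB
    · rw [Matrix.one_apply_ne hij] at hB
      by_cases hcc : c i = c j
      · have : A i j ≠ 1 := by
          intro h1
          apply hB
          simp [Kmat, hcc, h1]
        rw [if_pos hcc.symm]
        rcases hA01 i j ho with h0 | h1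
        · exact h0
        · exact absurd h1 this
      · have : A i j ≠ 0 := by
          intro h0
          apply hB
          simp [Kmat, hcc, h0]
        rw [if_neg (fun h => hcc h.symm)]
        rcases hA01 i j ho with h0 | h1
        · exact absurd h0 this
        · exact h1
  · exact Or.inl ho

lemma aux_sum_csize (c : Fin n → Fin p) : ∑ k : Fin p, (clusterSize c k : ℝ) = n := by
  have hnat : ∑ k : Fin p, clusterSize c k = n := by
    have h1 : ∀ k : Fin p, clusterSize c k
        = (Finset.univ.filter (fun j : Fin n => c j = k)).card := by
      intro k
      unfold clusterSize
      have : {j : Fin n | c j = k} = ↑(Finset.univ.filter (fun j : Fin n => c j = k)) := by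
        ext j; simp
      rw [this, Set.ncard_coe_finset]
    simp only [h1]
    rw [← Finset.card_eq_sum_card_fiberwise (fun j _ => Finset.mem_univ (c j))]
    simp
  exact_mod_cast congrArg (Nat.cast (R := ℝ)) hnat

lemma aux_rowBound (hn : 1 ≤ n) (hp : 0 < p) (Obs : Set (Fin n × Fin n))
    (A : Matrix (Fin n) (Fin n) ℝ)
    (hA01 : ∀ i j : Fin n, (i, j) ∈ Obs → A i j = 0 ∨ A i j = 1)
    (hAdiag : ∀ i, A i i = 0)
    (c : Fin n → Fin p) (hc : Function.Surjective c)
    (M : Matrix (Fin n) (Fin n) ℝ)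
    (hM : ∀ q ∈ GammaSet Obs A c, M q.1 q.2 = 0) (i : Fin n) :
    ∑ j, |M i j| ≤ (n : ℝ) * Dmax Obs A c * linfNorm M := by
  have hlinf := aux_linf_nonneg hn M
  have hDmax := aux_Dmax_nonneg hn hp Obs A c
  have key : ∀ k : Fin p,
      ∑ j ∈ Finset.univ.filter (fun j => c j = k), |M i j|
        ≤ Dmax Obs A c * (clusterSize c k : ℝ) * linfNorm M := by
    intro k
    set T := Finset.univ.filter (fun j : Fin n => c j = k) with hT
    set T' := T.filter (fun j => M i j ≠ 0) with hT'
    have hsub : T' ⊆ Finset.univ.filter (fun j : Fin n =>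
        c j = k ∧ ((i, j) ∉ Obs ∨ A i j = if k = c i then 0 else 1)) := by
      intro j hj
      rw [hT', Finset.mem_filter, hT, Finset.mem_filter] at hj
      obtain ⟨⟨-, hck⟩, hne⟩ := hj
      have hg : (i, j) ∉ GammaSet Obs A c := fun hmem => hne (hM (i, j) hmem)
      rcases aux_bad Obs A hA01 hAdiag c hg with h | h
      · simp [hck, h]
      · rw [Finset.mem_filter]
        refine ⟨Finset.mem_univ _, hck, Or.inr ?_⟩
        rw [← hck]
        exact h
    have hcard : (T'.card : ℝ) ≤ (dval Obs A c i k : ℝ) := by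
      rw [aux_dval_card Obs A c i k]
      exact_mod_cast Finset.card_le_card hsub
    have h1 : ∑ j ∈ T, |M i j| = ∑ j ∈ T', |M i j| := by
      refine (Finset.sum_subset (Finset.filter_subset _ _) (fun j hj hj' => ?_)).symm
      have hz : M i j = 0 := by
        by_contra hne
        exact hj' (Finset.mem_filter.mpr ⟨hj, hne⟩)
      simp [hz]
    have h2 : ∑ j ∈ T', |M i j| ≤ T'.card • linfNorm M :=
      Finset.sum_le_card_nsmul _ _ _ (fun j _ => aux_abs_le_linf M i j)
    have h3 : (T'.card : ℝ) * linfNorm M ≤ (dval Obs A c i k : ℝ) * linfNorm M :=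
      mul_le_mul_of_nonneg_right hcard hlinf
    have h4 : (dval Obs A c i k : ℝ)
        ≤ Dmax Obs A c * min (clusterSize c k : ℝ) (clusterSize c (c i) : ℝ) :=
      aux_dval_le Obs A c hc i k
    have h5 : Dmax Obs A c * min (clusterSize c k : ℝ) (clusterSize c (c i) : ℝ)
        ≤ Dmax Obs A c * (clusterSize c k : ℝ) :=
      mul_le_mul_of_nonneg_left (min_le_left _ _) hDmax
    calc ∑ j ∈ T, |M i j| = ∑ j ∈ T', |M i j| := h1
      _ ≤ T'.card • linfNorm M := h2
      _ = (T'.card : ℝ) * linfNorm M := by rw [nsmul_eq_mul]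
      _ ≤ (dval Obs A c i k : ℝ) * linfNorm M := h3
      _ ≤ Dmax Obs A c * (clusterSize c k : ℝ) * linfNorm M :=
          mul_le_mul_of_nonneg_right (h4.trans h5) hlinf
  calc ∑ j, |M i j|
      = ∑ k : Fin p, ∑ j ∈ Finset.univ.filter (fun j => c j = k), |M i j| :=
        (Finset.sum_fiberwise_of_maps_to (fun j _ => Finset.mem_univ (c j)) _).symm
    _ ≤ ∑ k : Fin p, Dmax Obs A c * (clusterSize c k : ℝ) * linfNorm M :=
        Finset.sum_le_sum (fun k _ => key k)
    _ = Dmax Obs A c * linfNorm M * ∑ k : Fin p, (clusterSize c k : ℝ) := by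
        rw [Finset.mul_sum]; congr 1; ext k; ring
    _ = (n : ℝ) * Dmax Obs A c * linfNorm M := by rw [aux_sum_csize c]; ring

lemma aux_gamma_symm (Obs : Set (Fin n × Fin n))
    (hObsSym : ∀ i j : Fin n, (i, j) ∈ Obs → (j, i) ∈ Obs)
    (A : Matrix (Fin n) (Fin n) ℝ) (hAsym : Aᵀ = A) (c : Fin n → Fin p) {i j : Fin n}
    (h : (i, j) ∈ GammaSet Obs A c) : (j, i) ∈ GammaSet Obs A c := by
  obtain ⟨ho, hb⟩ := h
  refine ⟨hObsSym _ _ ho, ?_⟩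
  unfold Bstar projS at hb ⊢
  simp only [Matrix.of_apply, if_pos ho, if_pos (hObsSym _ _ ho),
    Matrix.sub_apply, Matrix.add_apply] at hb ⊢
  have hA : A j i = A i j := by rw [← Matrix.transpose_apply A i j, hAsym]
  have h1 : (1 : Matrix (Fin n) (Fin n) ℝ) j i = (1 : Matrix (Fin n) (Fin n) ℝ) i j := by
    simp [Matrix.one_apply, eq_comm]
  have hK : Kmat c j i = Kmat c i j := by simp [Kmat, eq_comm]
  rw [hA, h1, hK]
  exact hb

lemma aux_schur (M : Matrix (Fin n) (Fin n) ℝ) (B : ℝ) (hB : 0 ≤ B)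
    (hrow : ∀ i, ∑ j, |M i j| ≤ B) (hcol : ∀ j, ∑ i, |M i j| ≤ B) :
    specNorm M ≤ B := by
  unfold specNorm
  refine ContinuousLinearMap.opNorm_le_bound _ hB fun x => ?_
  have happ : (LinearMap.toContinuousLinearMap (Matrix.toEuclideanLin M)) x
      = (WithLp.equiv 2 (Fin n → ℝ)).symm (M *ᵥ (WithLp.equiv 2 (Fin n → ℝ)) x) := rfl
  set y : Fin n → ℝ := (WithLp.equiv 2 (Fin n → ℝ)) x with hy
  have key : ∑ i, ((M *ᵥ y) i) ^ 2 ≤ B ^ 2 * ∑ j, (y j) ^ 2 := by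
    have step1 : ∀ i, ((M *ᵥ y) i) ^ 2 ≤ B * ∑ j, |M i j| * (y j) ^ 2 := by
      intro i
      have h1 : ((M *ᵥ y) i) ^ 2 ≤ (∑ j, |M i j| * |y j|) ^ 2 := by
        have hmv : (M *ᵥ y) i = ∑ j, M i j * y j := rfl
        rw [hmv]
        calc (∑ j, M i j * y j) ^ 2 = |∑ j, M i j * y j| ^ 2 := (sq_abs _).symm
          _ ≤ (∑ j, |M i j * y j|) ^ 2 :=
              pow_le_pow_left₀ (abs_nonneg _) (Finset.abs_sum_le_sum_abs _ _) 2
          _ = (∑ j, |M i j| * |y j|) ^ 2 := by simp [abs_mul]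
      have h2 : (∑ j, |M i j| * |y j|) ^ 2
          ≤ (∑ j, |M i j|) * ∑ j, |M i j| * (y j) ^ 2 := by
        refine Finset.sum_sq_le_sum_mul_sum_of_sq_eq_mul Finset.univ
          (fun j _ => abs_nonneg _) (fun j _ => by positivity) (fun j _ => ?_)
        rw [mul_pow, sq_abs (y j)]
        ring
      have h3 : (∑ j, |M i j|) * (∑ j, |M i j| * (y j) ^ 2)
          ≤ B * ∑ j, |M i j| * (y j) ^ 2 := by
        refine mul_le_mul_of_nonneg_right (hrow i) ?_
        positivity
      exact (h1.trans h2).trans h3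
    calc ∑ i, ((M *ᵥ y) i) ^ 2
        ≤ ∑ i, B * ∑ j, |M i j| * (y j) ^ 2 := Finset.sum_le_sum fun i _ => step1 i
      _ = B * ∑ j, (∑ i, |M i j|) * (y j) ^ 2 := by
          rw [← Finset.mul_sum, Finset.sum_comm]
          congr 1
          refine Finset.sum_congr rfl fun j _ => ?_
          rw [Finset.sum_mul]
      _ ≤ B * ∑ j, B * (y j) ^ 2 := by
          refine mul_le_mul_of_nonneg_left (Finset.sum_le_sum fun j _ => ?_) hB
          exact mul_le_mul_of_nonneg_right (hcol j) (sq_nonneg _)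
      _ = B ^ 2 * ∑ j, (y j) ^ 2 := by rw [← Finset.mul_sum]; ring
  rw [happ, EuclideanSpace.norm_eq, EuclideanSpace.norm_eq]
  simp only [WithLp.equiv_symm_apply, PiLp.toLp_apply, Real.norm_eq_abs, sq_abs]
  have hxy : ∀ j, x j = y j := fun j => rfl
  calc Real.sqrt (∑ i, ((M *ᵥ y) i) ^ 2)
      ≤ Real.sqrt (B ^ 2 * ∑ j, (y j) ^ 2) := Real.sqrt_le_sqrt key
    _ = B * Real.sqrt (∑ j, (y j) ^ 2) := by
        rw [Real.sqrt_mul (sq_nonneg B), Real.sqrt_sq hB]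
    _ = B * Real.sqrt (∑ j, (x j) ^ 2) := by simp only [hxy]

end AuxSpectral

/-- spectral norm bound `‖M‖ ≤ n D_max ‖M‖_∞` for matrices in `Γ⊥`. -/
theorem spectral_norm_bound_on_GammaPerp
    {n p : ℕ} (hn : 1 ≤ n) (hp : 0 < p)
    (Obs : Set (Fin n × Fin n))
    (hObsDiag : ∀ i : Fin n, (i, i) ∈ Obs)
    (hObsSym : ∀ i j : Fin n, (i, j) ∈ Obs → (j, i) ∈ Obs)
    (A : Matrix (Fin n) (Fin n) ℝ)
    (hA01 : ∀ i j : Fin n, (i, j) ∈ Obs → A i j = 0 ∨ A i j = 1)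
    (hAsym : Aᵀ = A) (hAdiag : ∀ i, A i i = 0)
    (c : Fin n → Fin p) (hc : Function.Surjective c)
    (hmono : Antitone (clusterSize c))
    (M : Matrix (Fin n) (Fin n) ℝ)
    (hM : ∀ q ∈ GammaSet Obs A c, M q.1 q.2 = 0) :
    specNorm M ≤ (n : ℝ) * Dmax Obs A c * linfNorm M :=  by
  have hMt : ∀ q ∈ GammaSet Obs A c, Mᵀ q.1 q.2 = 0 := by
    intro q hq
    exact hM (q.2, q.1) (aux_gamma_symm Obs hObsSym A hAsym c hq)
  have hB : 0 ≤ (n : ℝ) * Dmax Obs A c * linfNorm M :=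
    mul_nonneg (mul_nonneg (Nat.cast_nonneg n) (aux_Dmax_nonneg hn hp Obs A c))
      (aux_linf_nonneg hn M)
  refine aux_schur M _ hB (fun i => aux_rowBound hn hp Obs A hA01 hAdiag c hc M hM i)
    (fun j => ?_)
  have := aux_rowBound hn hp Obs A hA01 hAdiag c hc Mᵀ hMt j
  rw [aux_linf_transpose] at this
  simpa [Matrix.transpose_apply] using this
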